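/- arXiv:2010.08664 — 2 statements merged into one kernel-verified Lean document; each statement's English description precedes it below -/
import Mathlib

section
/- Every oriented circular-arc catch digraph that is unilaterally connected possesses a Hamiltonian (directed) path. -/
/-- Membership in the closed clockwise circular arc starting at `a` of length `ℓ`
on a circle of circumference 1 (points are reals modulo 1). -/
def arcMem (a ℓ x : ℝ) : Prop := Int.fract (x - a) ≤ ℓ

/-- The set of points of the circle (reals, modulo 1) lying on the arc. -/
def arcSet (a ℓ : ℝ) : Set ℝ := {x | arcMem a ℓ x}

/-- `E` is a circular-arc catch digraph: each vertex `v` carries a circular arc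
(start `a v`, length `ℓ v`) and a point `p v` inside its own arc, and
`E u v` iff `u ≠ v` and the point of `v` lies in the arc of `u`. -/
def IsCACatchDigraph {V : Type*} (E : V → V → Prop) : Prop :=
  ∃ a ℓ p : V → ℝ, (∀ v, arcMem (a v) (ℓ v) (p v)) ∧
    ∀ u v, E u v ↔ u ≠ v ∧ arcMem (a u) (ℓ u) (p v)

/-- Proper circular-arc catch digraph: as above, with no arc properly contained
in another. -/
def IsProperCACatchDigraph {V : Type*} (E : V → V → Prop) : Prop :=
  ∃ a ℓ p : V → ℝ, (∀ v, arcMem (a v) (ℓ v) (p v)) ∧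
    (∀ u v : V, ¬ arcSet (a u) (ℓ u) ⊂ arcSet (a v) (ℓ v)) ∧
    ∀ u v, E u v ↔ u ≠ v ∧ arcMem (a u) (ℓ u) (p v)

/-- A digraph is oriented: no pair of vertices has edges in both directions. -/
def Oriented {V : Type*} (E : V → V → Prop) : Prop := ∀ u v, E u v → ¬ E v u

/-- A subset of `Fin n` is a circular (cyclically consecutive) block. -/
def CircBlock {n : ℕ} (S : Set (Fin n)) : Prop :=
  S = ∅ ∨ ∃ a b : Fin n, S = {i | i - a ≤ b - a}

/-!
Orientation forces the points of distinct vertices to be distinct modulo 1; list them in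
circular order. An arc containing its own point and the point of an out-neighbour contains one
of the two circular segments between them, so a vertex with an out-neighbour is adjacent to its
clockwise or to its counterclockwise successor. Orientation forces all vertices to make the same
choice, so once every vertex has an out-neighbour the circular order is a Hamiltonian cycle.

Induct on the number of vertices, with a vertex `y` reached from all others as the prescribed
end of the path. If `y` has an out-neighbour then so has every vertex (the first step of its
path to `y`), and the Hamiltonian cycle is cut open just after `y`. Otherwise `y` is a sink,
the other vertices still form a unilateral digraph, and one of them, `x` with `x → y`, is
reached from all the others: append `y` to a Hamiltonian path of the rest ending at `x`.
-/

open Relation Function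

section FractArith

variable {R : Type*} [CommRing R] [LinearOrder R] [IsStrictOrderedRing R] [FloorRing R]

theorem fract_sub_of_fract_sub_le {a b c : R} (h : Int.fract (b - a) ≤ Int.fract (c - a)) :
    Int.fract (c - b) = Int.fract (c - a) - Int.fract (b - a) := by
  rw [Int.fract_eq_iff]
  refine ⟨by linarith, by linarith [Int.fract_lt_one (c - a), Int.fract_nonneg (b - a)],
    ⌊c - a⌋ - ⌊b - a⌋, ?_⟩
  simp only [Int.fract, Int.cast_sub]
  ring

theorem fract_sub_of_fract_sub_le' {a b c : R} (h : Int.fract (c - b) ≤ Int.fract (c - a)) :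
    Int.fract (b - a) = Int.fract (c - a) - Int.fract (c - b) := by
  rw [Int.fract_eq_iff]
  refine ⟨by linarith, by linarith [Int.fract_lt_one (c - a), Int.fract_nonneg (c - b)],
    ⌊c - a⌋ - ⌊c - b⌋, ?_⟩
  simp only [Int.fract, Int.cast_sub]
  ring

end FractArith

theorem arcMem_cw_or_ccw {a ℓ c x : ℝ} (hc : arcMem a ℓ c) (hx : arcMem a ℓ x) :
    (∀ y, Int.fract (y - c) ≤ Int.fract (x - c) → arcMem a ℓ y) ∨
    (∀ y, Int.fract (c - y) ≤ Int.fract (c - x) → arcMem a ℓ y) := by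
  unfold arcMem at *
  rcases le_total (Int.fract (c - a)) (Int.fract (x - a)) with hcx | hxc
  · refine Or.inl fun y hy => ?_
    rw [fract_sub_of_fract_sub_le hcx] at hy
    calc Int.fract (y - a) = Int.fract ((y - c) + (c - a)) := by ring_nf
      _ ≤ Int.fract (y - c) + Int.fract (c - a) := Int.fract_add_le _ _
      _ ≤ ℓ := by linarith
  · refine Or.inr fun y hy => ?_
    rw [fract_sub_of_fract_sub_le hxc] at hy
    have hcy : Int.fract (c - y) ≤ Int.fract (c - a) := by linarith [Int.fract_nonneg (x - a)]
    rw [fract_sub_of_fract_sub_le' hcy]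
    linarith [Int.fract_nonneg (c - y)]

structure IsCatchModel {W : Type*} (E : W → W → Prop) (a ℓ p : W → ℝ) : Prop where
  mem_own : ∀ v, arcMem (a v) (ℓ v) (p v)
  adj_iff : ∀ u v, E u v ↔ u ≠ v ∧ arcMem (a u) (ℓ u) (p v)

def IsCWNearest {W : Type*} (p : W → ℝ) (u v : W) : Prop :=
  ∀ w, w ≠ u → Int.fract (p v - p u) ≤ Int.fract (p w - p u)

section Model

variable {W : Type*} {E : W → W → Prop} {a ℓ p : W → ℝ}

theorem IsCatchModel.fract_sub_ne_zero (hM : IsCatchModel E a ℓ p) (horient : Oriented E)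
    {u v : W} (huv : u ≠ v) : Int.fract (p u - p v) ≠ 0 := by
  intro h
  obtain ⟨z, hz⟩ := Int.fract_eq_zero_iff.mp h
  have hpu : ∀ b, p u - b = p v - b + z := fun b => by linarith
  refine horient u v ((hM.adj_iff u v).2 ⟨huv, ?_⟩) ((hM.adj_iff v u).2 ⟨huv.symm, ?_⟩)
  · have := hM.mem_own u
    rwa [arcMem, hpu, Int.fract_add_intCast] at this
  · have := hM.mem_own v
    rwa [arcMem, ← Int.fract_add_intCast _ z, ← hpu] at this

theorem IsCWNearest.fract_sub_le (hp : ∀ u v, u ≠ v → Int.fract (p u - p v) ≠ 0)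
    {u v : W} (h : IsCWNearest p u v) (huv : u ≠ v) {w : W} (hwv : w ≠ v) :
    Int.fract (p v - p u) ≤ Int.fract (p v - p w) := by
  by_contra! hlt
  have hwu : w ≠ u := by rintro rfl; exact lt_irrefl _ hlt
  have hsplit := fract_sub_of_fract_sub_le' hlt.le
  have hpos := (Int.fract_nonneg _).lt_of_ne' (hp v w hwv.symm)
  linarith [h w hwu]

theorem IsCatchModel.adj_or_adj (hM : IsCatchModel E a ℓ p)
    (hp : ∀ u v, u ≠ v → Int.fract (p u - p v) ≠ 0) {t u v x : W}
    (hv : IsCWNearest p u v) (ht : IsCWNearest p t u) (htu : t ≠ u) (huv : u ≠ v)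
    (hx : E u x) : E u v ∨ E u t := by
  obtain ⟨hux, hx⟩ := (hM.adj_iff u x).1 hx
  rcases arcMem_cw_or_ccw (hM.mem_own u) hx with hcw | hccw
  · exact Or.inl ((hM.adj_iff u v).2 ⟨huv, hcw _ (hv x hux.symm)⟩)
  · exact Or.inr ((hM.adj_iff u t).2 ⟨htu.symm, hccw _ (ht.fract_sub_le hp htu hux.symm)⟩)

end Model

theorem exists_equiv_fin_strictMono {W β : Type*} [Fintype W] [LinearOrder β] {f : W → β}
    (hf : Injective f) {n : ℕ} (hW : Fintype.card W = n) :
    ∃ e : Fin n ≃ W, StrictMono (f ∘ e) := by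
  let : LinearOrder W := LinearOrder.lift' f hf
  exact ⟨(Fintype.orderIsoFinOfCardEq W hW).toEquiv, (Fintype.orderIsoFinOfCardEq W hW).strictMono⟩

theorem StrictMono.fract_sub_add_one_le {n : ℕ} {K : Fin (n + 1) → ℝ} (hK : StrictMono K)
    (h0 : ∀ i, 0 ≤ K i) (h1 : ∀ i, K i < 1) {i j : Fin (n + 1)} (hji : j ≠ i) :
    Int.fract (K (i + 1) - K i) ≤ Int.fract (K j - K i) := by
  have hle : ∀ {i j}, i ≤ j → Int.fract (K j - K i) = K j - K i := fun {i j} hij =>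
    Int.fract_eq_self.2 ⟨sub_nonneg.2 (hK.monotone hij), by linarith [h0 i, h1 j]⟩
  have hlt : ∀ {i j}, j < i → Int.fract (K j - K i) = K j - K i + 1 := fun {i j} hij => by
    rw [Int.fract_eq_iff]
    exact ⟨by linarith [h0 j, h1 i], by linarith [hK hij], -1, by push_cast; ring⟩
  rcases (Fin.le_last i).eq_or_lt with rfl | hi
  · have hj : j < Fin.last n := lt_of_le_of_ne (Fin.le_last j) hji
    rw [Fin.last_add_one, hlt hj, hlt ((Fin.zero_le j).trans_lt hj)]
    linarith [hK.monotone (Fin.zero_le j)]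
  · have hsucc : i < i + 1 := by rw [Fin.lt_def, Fin.val_add_one_of_lt hi]; omega
    rw [hle hsucc.le]
    rcases hji.lt_or_gt with hj | hj
    · rw [hlt hj]; linarith [h1 (i + 1), h0 j]
    · have : i + 1 ≤ j := by
        rw [Fin.le_def, Fin.val_add_one_of_lt hi]; exact hj
      rw [hle hj.le]; linarith [hK.monotone this]

theorem exists_equiv_isCWNearest {W : Type*} [Fintype W] {p : W → ℝ}
    (hp : ∀ u v, u ≠ v → Int.fract (p u - p v) ≠ 0) {n : ℕ} (hW : Fintype.card W = n + 1) :
    ∃ c : Fin (n + 1) ≃ W, ∀ i, IsCWNearest p (c i) (c (i + 1)) := by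
  obtain ⟨w₀⟩ : Nonempty W := Fintype.card_pos_iff.1 (by omega)
  set key : W → ℝ := fun v => Int.fract (p v - p w₀)
  have hkey : ∀ u v, Int.fract (p u - p v) = Int.fract (key u - key v) := fun u v => by
    rw [Int.fract_eq_fract]
    exact ⟨⌊p u - p w₀⌋ - ⌊p v - p w₀⌋, by simp only [key, Int.fract]; push_cast; ring⟩
  have hinj : Injective key := fun u v h => by
    by_contra hne
    exact hp u v hne (by rw [hkey, h, sub_self, Int.fract_zero])
  obtain ⟨c, hc⟩ := exists_equiv_fin_strictMono hinj hW
  refine ⟨c, fun i w hw => ?_⟩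
  obtain ⟨j, rfl⟩ := c.surjective w
  rw [hkey, hkey]
  exact hc.fract_sub_add_one_le (fun _ => Int.fract_nonneg _) (fun _ => Int.fract_lt_one _)
    (c.injective.ne_iff.1 hw)

theorem Fin.forall_rel_add_one_or_forall_rel_sub_one {n : ℕ}
    {R : Fin (n + 1) → Fin (n + 1) → Prop} (hanti : ∀ i j, R i j → ¬ R j i)
    (h : ∀ i, R i (i + 1) ∨ R i (i - 1)) :
    (∀ i, R i (i + 1)) ∨ ∀ i, R i (i - 1) := by
  by_cases hnone : ∀ i, ¬ R i (i + 1)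
  · exact Or.inr fun i => (h i).resolve_left (hnone i)
  · obtain ⟨i₀, h₀⟩ := not_forall_not.1 hnone
    have hstep : ∀ i, R i (i + 1) → R (i + 1) (i + 1 + 1) := fun i hi =>
      (h (i + 1)).resolve_right (by rw [add_sub_cancel_right]; exact hanti _ _ hi)
    have hiter : ∀ j, R (i₀ + j) (i₀ + j + 1) := by
      intro j
      induction j using Fin.induction with
      | zero => simpa using h₀
      | succ j ih => simpa [← Fin.coeSucc_eq_succ, add_assoc] using hstep _ ih
    refine Or.inl fun i => ?_
    simpa using hiter (i - i₀)

theorem IsCACatchDigraph.exists_hamCycle {W : Type*} [Fintype W] {E : W → W → Prop}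
    (hcatch : IsCACatchDigraph E) (horient : Oriented E) {n : ℕ} (hW : Fintype.card W = n + 2)
    (hout : ∀ v, ∃ w, E v w) : ∃ c : Fin (n + 2) ≃ W, ∀ i, E (c i) (c (i + 1)) := by
  obtain ⟨a, ℓ, p, hown, hadj⟩ := hcatch
  have hM : IsCatchModel E a ℓ p := ⟨hown, hadj⟩
  have hp : ∀ u v, u ≠ v → Int.fract (p u - p v) ≠ 0 := fun _ _ => hM.fract_sub_ne_zero horient
  obtain ⟨c, hc⟩ := exists_equiv_isCWNearest hp hW
  have hnext_or_prev : ∀ i, E (c i) (c (i + 1)) ∨ E (c i) (c (i - 1)) := fun i => by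
    obtain ⟨x, hx⟩ := hout (c i)
    have hprev := hc (i - 1)
    rw [sub_add_cancel] at hprev
    exact hM.adj_or_adj hp (hc i) hprev (by simp) (by simp) hx
  rcases Fin.forall_rel_add_one_or_forall_rel_sub_one (R := fun i j => E (c i) (c j))
    (fun _ _ => horient _ _) hnext_or_prev with hcw | hccw
  · exact ⟨c, hcw⟩
  · refine ⟨(Equiv.neg _).trans c, fun i => ?_⟩
    simpa [neg_add_eq_sub] using hccw (-i)

def IsHamPath {V : Type*} (E : V → V → Prop) {n : ℕ} (σ : Fin (n + 1) ≃ V) : Prop :=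
  ∀ i : Fin n, E (σ i.castSucc) (σ i.succ)

theorem exists_isHamPath_of_cycle {V : Type*} {E : V → V → Prop} {n : ℕ} (c : Fin (n + 1) ≃ V)
    (hc : ∀ i, E (c i) (c (i + 1))) (y : V) :
    ∃ σ : Fin (n + 1) ≃ V, IsHamPath E σ ∧ σ (Fin.last n) = y := by
  refine ⟨(Equiv.addRight (c.symm y - Fin.last n)).trans c, fun i => ?_, by simp⟩
  simpa [← Fin.coeSucc_eq_succ, add_right_comm] using hc (i.castSucc + (c.symm y - Fin.last n))

theorem exists_isHamPath_snoc {V : Type*} [DecidableEq V] {E : V → V → Prop} {n : ℕ} {y : V}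
    (σ : Fin (n + 1) ≃ {v // v ≠ y}) (hσ : IsHamPath (fun s t : {v // v ≠ y} => E s t) σ)
    (hy : E (σ (Fin.last n)) y) :
    ∃ τ : Fin (n + 2) ≃ V, IsHamPath E τ ∧ τ (Fin.last (n + 1)) = y := by
  set τ : Fin (n + 2) ≃ V :=
    finSuccEquivLast.trans ((Equiv.optionCongr σ).trans (Equiv.optionSubtypeNe y))
  have hτ : ∀ k : Fin (n + 1), τ k.castSucc = σ k := by simp [τ]
  refine ⟨τ, fun i => ?_, by simp [τ]⟩
  induction i using Fin.lastCases with
  | last => simpa [hτ, τ] using hy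
  | cast j =>
    rw [Fin.succ_castSucc, hτ, hτ]
    exact hσ j

def Unilateral {V : Type*} (E : V → V → Prop) : Prop :=
  ∀ u v, ReflTransGen E u v ∨ ReflTransGen E v u

theorem Unilateral.exists_forall_reflTransGen {V : Type*} [Finite V] [Nonempty V]
    {E : V → V → Prop} (h : Unilateral E) : ∃ y, ∀ v, ReflTransGen E v y := by
  classical
  have := Fintype.ofFinite V
  obtain ⟨y, hy⟩ := Finite.exists_max fun v => (Finset.univ.filter (ReflTransGen E · v)).card
  refine ⟨y, fun v => by_contra fun hvy => ?_⟩
  have hyv := (h v y).resolve_left hvy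
  refine (hy v).not_gt (Finset.card_lt_card ?_)
  refine (Finset.ssubset_iff_of_subset fun w hw => ?_).2
    ⟨v, by simpa using ReflTransGen.refl, by simpa using hvy⟩
  simp only [Finset.mem_filter, Finset.mem_univ, true_and] at hw ⊢
  exact hw.trans hyv

theorem Relation.ReflTransGen.subtype_of_backward_closed {V : Type*} {E : V → V → Prop}
    {P : V → Prop} (hP : ∀ u v, E u v → P v → P u) {u v : V} (h : ReflTransGen E u v)
    (hu : P u) (hv : P v) :
    ReflTransGen (fun s t : Subtype P => E s t) ⟨u, hu⟩ ⟨v, hv⟩ := by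
  induction h with
  | refl => rfl
  | tail _ hcv ih => exact (ih (hP _ _ hcv hv)).tail hcv

theorem IsCACatchDigraph.subtype {V : Type*} {E : V → V → Prop} (h : IsCACatchDigraph E)
    (P : V → Prop) : IsCACatchDigraph (fun s t : Subtype P => E s t) := by
  obtain ⟨a, ℓ, p, hown, hadj⟩ := h
  exact ⟨fun v => a v, fun v => ℓ v, fun v => p v, fun v => hown v,
    fun u v => (hadj u v).trans (and_congr_left' Subtype.coe_ne_coe)⟩

theorem Unilateral.subtype {V : Type*} {E : V → V → Prop} (h : Unilateral E) {P : V → Prop}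
    (hP : ∀ u v, E u v → P v → P u) : Unilateral (fun s t : Subtype P => E s t) := fun u v =>
  (h u v).imp (·.subtype_of_backward_closed hP _ _)
    (·.subtype_of_backward_closed hP _ _)

theorem Unilateral.exists_adj_forall_reflTransGen_of_sink {V : Type*} [Finite V]
    {E : V → V → Prop} (huni : Unilateral E) {y : V} (hsink : ∀ x, ¬ E y x)
    (hy : ∀ v, ReflTransGen E v y) [Nonempty {v // v ≠ y}] :
    ∃ x : {v // v ≠ y}, E x y ∧ ∀ v, ReflTransGen (fun s t : {v // v ≠ y} => E s t) v x := by
  have hP : ∀ u v, E u v → v ≠ y → u ≠ y := fun u v huv _ hu => hsink v (hu ▸ huv)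
  obtain ⟨m, hm⟩ := (huni.subtype hP).exists_forall_reflTransGen
  obtain hmy | ⟨x, hmx, hxy⟩ := (hy m).cases_tail
  · exact absurd hmy.symm m.2
  · have hx : x ≠ y := fun h => hsink y (h ▸ hxy)
    exact ⟨⟨x, hx⟩, hxy, fun v => (hm v).trans (hmx.subtype_of_backward_closed hP m.2 hx)⟩

theorem exists_isHamPath_ending_at (n : ℕ) {V : Type*} [Fintype V] (E : V → V → Prop)
    (hV : Fintype.card V = n + 1) (hcatch : IsCACatchDigraph E) (horient : Oriented E)
    (huni : Unilateral E) (y : V) (hy : ∀ v, ReflTransGen E v y) :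
    ∃ σ : Fin (n + 1) ≃ V, IsHamPath E σ ∧ σ (Fin.last n) = y := by
  classical
  induction n generalizing V with
  | zero =>
    have := Fintype.card_le_one_iff_subsingleton.1 hV.le
    exact ⟨(Fintype.equivFinOfCardEq hV).symm, finZeroElim, Subsingleton.elim _ _⟩
  | succ n ih =>
    by_cases hout : ∃ x, E y x
    · obtain ⟨x, hyx⟩ := hout
      have hout' : ∀ v, ∃ w, E v w := fun v => (hy v).cases_head.elim
        (fun hvy => hvy ▸ ⟨x, hyx⟩) fun ⟨w, hvw, _⟩ => ⟨w, hvw⟩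
      obtain ⟨c, hc⟩ := hcatch.exists_hamCycle horient hV hout'
      exact exists_isHamPath_of_cycle c hc y
    · have hsink : ∀ x, ¬ E y x := not_exists.1 hout
      have hP : ∀ u v, E u v → v ≠ y → u ≠ y := fun u v huv _ hu => hsink v (hu ▸ huv)
      have hT : Fintype.card {v // v ≠ y} = n + 1 := by
        rw [Fintype.card_subtype_compl, Fintype.card_subtype_eq, hV]; rfl
      have : Nonempty {v // v ≠ y} := Fintype.card_pos_iff.1 (by omega)
      obtain ⟨x, hxy, hx⟩ := huni.exists_adj_forall_reflTransGen_of_sink hsink hy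
      obtain ⟨σ, hσ, hσx⟩ := ih _ hT (hcatch.subtype _) (fun u v => horient u v)
        (huni.subtype hP) x hx
      exact exists_isHamPath_snoc σ hσ (hσx ▸ hxy)

/-- every unilaterally connected oriented circular-arc catch
digraph has a directed Hamiltonian path. -/
theorem stmt_3 {V : Type*} [Fintype V] (E : V → V → Prop)
    (horient : Oriented E)
    (hcatch : IsCACatchDigraph E)
    (hunilateral : ∀ u v : V,
        Relation.ReflTransGen E u v ∨ Relation.ReflTransGen E v u) :
    ∃ σ : Fin (Fintype.card V) ≃ V,
      ∀ (i : ℕ) (h : i + 1 < Fintype.card V),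
        E (σ ⟨i, by omega⟩) (σ ⟨i + 1, h⟩) := by
  by_cases hV0 : Fintype.card V = 0
  · exact ⟨(Fintype.equivFin V).symm, fun i hi => by omega⟩
  · obtain ⟨n, hV⟩ := Nat.exists_eq_add_one_of_ne_zero hV0
    have : Nonempty V := Fintype.card_pos_iff.1 (by omega)
    obtain ⟨y, hy⟩ := Unilateral.exists_forall_reflTransGen hunilateral
    obtain ⟨σ, hσ, -⟩ := exists_isHamPath_ending_at n E hV hcatch horient hunilateral y hy
    exact ⟨(finCongr hV).trans σ, fun i hi => hσ ⟨i, by omega⟩⟩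
end

section
/- A simple digraph G is a proper circular-arc catch digraph if and only if its augmented adjacency matrix can, after independent permutations of rows and columns, be transformed into a matrix B such that: (1) B satisfies circular ones property along both rows and columns; (2) for every two rows r, s of B, the difference r − s of their circular one-blocks is a circular interval; and (3) for every full row r and every two nontrivial rows s, t, the set r − s − t is a circular interval. -/
/-- The augmented adjacency matrix of a digraph, with rows and columns
independently permuted. -/
def AugM {V : Type*} {n : ℕ} (E : V → V → Prop) (ρ γ : Fin n ≃ V)
    (i j : Fin n) : Prop :=
  E (ρ i) (γ j) ∨ ρ i = γ j

/-- The three matrix conditions: circular ones along rows and columns; the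
difference of the one-blocks of any two rows is a circular interval; and for
any full row r and nontrivial rows s, t the set r - s - t is a circular
interval. -/
def MatCond {n : ℕ} (B : Fin n → Fin n → Prop) : Prop :=
  (∀ i, CircBlock {j | B i j}) ∧
  (∀ j, CircBlock {i | B i j}) ∧
  (∀ r s, CircBlock {j | B r j ∧ ¬ B s j}) ∧
  (∀ r s t, (∀ j, B r j) →
     (∃ j, B s j) → (∃ j, ¬ B s j) → (∃ j, B t j) → (∃ j, ¬ B t j) →
     CircBlock {j | B r j ∧ ¬ B s j ∧ ¬ B t j})

/-!
Forward direction: list the columns by the positions of the points and the rows by the starting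
points of the arcs. Every set occurring in the matrix conditions then has the form
`{j | fract (q j - c) ∈ J}` with `q` sorted in `[0, 1)` and `J` an interval of `ℝ`, and such a
set is a cyclic interval. For a row this is immediate; for the column of a point `x`, the
non-nestedness of the arcs makes the arcs containing `x` exactly those starting at most some
distance behind `x`; and the points of the arc of `r` outside the arc of `s` are, unless the arcs
coincide, the points of the arc of `r` in a window cut out by the arc of `s`.

Backward direction: put column `j` at `j / n` and give the row whose ones form the cyclic interval
`[a, b]` the arc `[a - x, b + x] / n`, with a margin `x ∈ (0, 1)` that decreases strictly with the
length of the row. Rows that are not nested get non-nested arcs, and equal rows equal arcs. If row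
`S` lies strictly inside a row `T` that is not full, condition (2) applied to `T - S` forces `S`
and `T` to share an endpoint, and there the larger margin of `S` makes its arc stick out of that
of `T`. All full rows get the arc `[g + 1 - x, g + x] / n`, where `g` is a column such that every
row contains `g` or `g + 1`; such a `g` exists by condition (3) and the circularity of the columns.
A nontrivial row then either shares an endpoint with this arc or contains both `g` and `g + 1`,
and then its arc meets the gap `(g + x, g + 1 - x) / n`.
-/

namespace Fin

variable {n : ℕ}

theorem val_sub_eq_ite (a b : Fin n) :
    (a - b).val = if b ≤ a then a.val - b.val else a.val + n - b.val := by
  split_ifs with h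
  · exact sub_val_of_le h
  · rw [coe_sub_iff_lt.mpr (lt_of_not_ge h)]
    omega

theorem val_sub_add_val_sub {x y : Fin n} (h : x ≠ y) : (x - y).val + (y - x).val = n := by
  have := x.isLt; have := y.isLt
  have : x.val ≠ y.val := fun h' => h (Fin.ext h')
  rw [val_sub_eq_ite, val_sub_eq_ite]
  split_ifs <;> simp only [Fin.le_def] at * <;> omega

theorem exists_val_sub_eq (c a : Fin n) :
    ∃ k : ℤ, ((c : ℕ) : ℝ) - (a : ℕ) = ((c - a : Fin n) : ℕ) + k * n := by
  rw [val_sub_eq_ite]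
  split_ifs with h
  · exact ⟨0, by push_cast [Nat.cast_sub (Fin.le_def.mp h)]; ring⟩
  · refine ⟨-1, ?_⟩
    rw [Nat.cast_sub (by omega)]
    push_cast
    ring

variable [NeZero n]

theorem val_neg_one_of_neZero : ((-1 : Fin n) : ℕ) = n - 1 := by
  obtain ⟨m, rfl⟩ := Nat.exists_eq_succ_of_ne_zero (NeZero.ne n)
  simp

theorem val_sub_sub_of_val_sub_le {x y c : Fin n} (h : (x - c).val ≤ (y - c).val) :
    (y - x).val = (y - c).val - (x - c).val := by
  rw [← sub_val_of_le (Fin.le_def.mpr h), sub_sub_sub_cancel_right]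

end Fin

def cyclicIcc {n : ℕ} (a b : Fin n) : Set (Fin n) := {i | i - a ≤ b - a}

section cyclicIcc

variable {n : ℕ} {a b i : Fin n}

theorem mem_cyclicIcc : i ∈ cyclicIcc a b ↔ (i - a).val ≤ (b - a).val := Fin.le_def

theorem circBlock_iff {S : Set (Fin n)} : CircBlock S ↔ S = ∅ ∨ ∃ a b, S = cyclicIcc a b :=
  Iff.rfl

theorem right_mem_cyclicIcc : b ∈ cyclicIcc a b := mem_cyclicIcc.mpr le_rfl

theorem cyclicIcc_eq_univ_of_val_sub (h : n - 1 ≤ (b - a).val) : cyclicIcc a b = Set.univ :=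
  Set.eq_univ_of_forall fun i => mem_cyclicIcc.mpr (by have := (i - a).isLt; omega)

theorem cyclicIcc_eq_Icc (h : a ≤ b) : cyclicIcc a b = Set.Icc a b := by
  ext i
  have := i.isLt
  rw [mem_cyclicIcc, Fin.val_sub_eq_ite, Fin.val_sub_eq_ite, if_pos h, Set.mem_Icc]
  simp only [Fin.le_def] at *
  split_ifs <;> omega

variable [NeZero n]

theorem left_mem_cyclicIcc : a ∈ cyclicIcc a b := by
  simp [mem_cyclicIcc]

theorem val_sub_lt_of_mem_cyclicIcc (hi : i ∈ cyclicIcc a b) (hib : i ≠ b) :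
    (i - a).val < (b - a).val :=
  lt_of_le_of_ne (mem_cyclicIcc.mp hi) fun h => hib (sub_left_inj.mp (Fin.ext h))

theorem cyclicIcc_add_one_self (g : Fin n) : cyclicIcc (g + 1) g = Set.univ :=
  cyclicIcc_eq_univ_of_val_sub (by rw [show g - (g + 1) = -1 by abel, Fin.val_neg_one_of_neZero])

theorem ncard_cyclicIcc (a b : Fin n) : (cyclicIcc a b).ncard = (b - a).val + 1 := by
  have : cyclicIcc a b = Equiv.subRight a ⁻¹' Set.Iic (b - a) := rfl
  rw [this, Set.ncard_preimage_of_injective_subset_range (Equiv.injective _) (by simp),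
    ← Finset.coe_Iic, Set.ncard_coe_finset, Fin.card_Iic]

theorem sub_one_notMem_cyclicIcc (h : cyclicIcc a b ≠ Set.univ) : a - 1 ∉ cyclicIcc a b := by
  intro ha
  rw [mem_cyclicIcc, sub_sub_cancel_left, Fin.val_neg_one_of_neZero] at ha
  exact h (cyclicIcc_eq_univ_of_val_sub ha)

theorem add_one_notMem_cyclicIcc (h : cyclicIcc a b ≠ Set.univ) : b + 1 ∉ cyclicIcc a b := by
  intro hb
  have := Fin.val_sub_sub_of_val_sub_le (mem_cyclicIcc.mp hb)
  rw [show b - (b + 1) = -1 by abel, Fin.val_neg_one_of_neZero] at this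
  exact h (cyclicIcc_eq_univ_of_val_sub (by omega))

theorem eq_left_of_mem_of_sub_one_notMem (hi : i ∈ cyclicIcc a b)
    (hi' : i - 1 ∉ cyclicIcc a b) : i = a := by
  by_contra hia
  refine hi' (mem_cyclicIcc.mpr ?_)
  rw [sub_right_comm, Fin.val_sub_one_of_ne_zero (sub_ne_zero.mpr hia)]
  exact (Nat.sub_le _ _).trans (mem_cyclicIcc.mp hi)

theorem eq_right_of_mem_of_add_one_notMem (hi : i ∈ cyclicIcc a b)
    (hi' : i + 1 ∉ cyclicIcc a b) : i = b := by
  by_contra hib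
  have hlt := val_sub_lt_of_mem_cyclicIcc hi hib
  refine hi' (mem_cyclicIcc.mpr ?_)
  rw [add_sub_right_comm, Fin.val_add_one_of_lt' (by have := (b - a).isLt; omega)]
  exact hlt

theorem add_one_mem_cyclicIcc (h : a ≠ b) : b + 1 ∈ cyclicIcc b a := by
  rw [mem_cyclicIcc, add_sub_cancel_left, Fin.val_one']
  have : (a - b).val ≠ 0 := fun h0 => h (sub_eq_zero.mp (Fin.ext h0))
  have := Nat.mod_le 1 n
  omega

end cyclicIcc

namespace CircBlock

variable {n : ℕ} {S : Set (Fin n)}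

theorem of_ordConnected (h : S.OrdConnected) : CircBlock S := by
  rcases S.eq_empty_or_nonempty with hS | hS
  · exact Or.inl hS
  obtain ⟨a, ha, ha_min⟩ := Set.exists_min_image S id S.toFinite hS
  obtain ⟨b, hb, hb_max⟩ := Set.exists_max_image S id S.toFinite hS
  refine circBlock_iff.mpr (Or.inr ⟨a, b, ?_⟩)
  rw [cyclicIcc_eq_Icc (show a ≤ b from ha_min b hb)]
  exact (h.out ha hb).antisymm' fun i hi => ⟨ha_min i hi, hb_max i hi⟩

variable [NeZero n]

theorem of_preimage_add (c : Fin n) (h : CircBlock ((· + c) ⁻¹' S)) : CircBlock S := by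
  rcases circBlock_iff.mp h with h | ⟨a, b, h⟩
  · refine Or.inl (Set.eq_empty_of_forall_notMem fun i hi => ?_)
    have : i - c ∈ (· + c) ⁻¹' S := by simpa using hi
    rwa [h] at this
  · refine circBlock_iff.mpr (Or.inr ⟨a + c, b + c, Set.ext fun i => ?_⟩)
    have := congrArg (i - c ∈ ·) h
    simp only [Set.mem_preimage, sub_add_cancel, eq_iff_iff] at this
    rw [this, mem_cyclicIcc, mem_cyclicIcc, sub_sub, add_comm c a, add_sub_add_right_eq_sub]

protected theorem compl (h : CircBlock S) : CircBlock Sᶜ := by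
  rcases circBlock_iff.mp h with rfl | ⟨a, b, rfl⟩
  · rw [Set.compl_empty]
    exact of_ordConnected Set.ordConnected_univ
  · refine of_preimage_add a (of_ordConnected ?_)
    have : (· + a) ⁻¹' (cyclicIcc a b)ᶜ = Set.Ioi (b - a) := by
      ext i
      simp [mem_cyclicIcc]
    rw [this]
    exact Set.ordConnected_Ioi

theorem union_of_isLowerSet_of_isUpperSet {L U : Set (Fin n)} (hL : IsLowerSet L)
    (hU : IsUpperSet U) : CircBlock (L ∪ U) := by
  rw [← compl_compl (L ∪ U), Set.compl_union]
  exact (of_ordConnected (hL.compl.ordConnected.inter hU.compl.ordConnected)).compl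

theorem cyclicIcc_subset_or_cyclicIcc_subset (h : CircBlock S) {u w : Fin n} (hu : u ∈ S)
    (hw : w ∈ S) : cyclicIcc u w ⊆ S ∨ cyclicIcc w u ⊆ S := by
  rcases circBlock_iff.mp h with rfl | ⟨a, b, rfl⟩
  · exact absurd hu (Set.notMem_empty u)
  wlog huw : (u - a).val ≤ (w - a).val generalizing u w
  · exact (this hw hu (by omega)).symm
  left
  intro z hz
  have hzu := mem_cyclicIcc.mp hz
  rw [Fin.val_sub_sub_of_val_sub_le huw] at hzu
  have hw' := mem_cyclicIcc.mp hw
  rw [mem_cyclicIcc, ← sub_add_sub_cancel z u a,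
    Fin.val_add_eq_of_add_lt (by have := (b - a).isLt; omega)]
  omega

theorem cyclicIcc_subset_of_inter {u w : Fin n} (h : CircBlock (cyclicIcc u w ∩ S))
    (huw : cyclicIcc u w ≠ Set.univ) (hu : u ∈ S) (hw : w ∈ S) : cyclicIcc u w ⊆ S := by
  rcases h.cyclicIcc_subset_or_cyclicIcc_subset ⟨left_mem_cyclicIcc, hu⟩
    ⟨right_mem_cyclicIcc, hw⟩ with h | h
  · exact h.trans Set.inter_subset_right
  · rcases eq_or_ne u w with rfl | hne
    · exact h.trans Set.inter_subset_right
    · exact absurd (h (add_one_mem_cyclicIcc hne)).1 (add_one_notMem_cyclicIcc huw)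

theorem mem_of_val_sub_le {c x y z : Fin n} (hS : CircBlock S) (hc : c ∉ S) (hx : x ∈ S)
    (hz : z ∈ S) (hxy : (x - c).val ≤ (y - c).val) (hyz : (y - c).val ≤ (z - c).val) :
    y ∈ S := by
  rcases hS.cyclicIcc_subset_or_cyclicIcc_subset hx hz with h | h
  · refine h (mem_cyclicIcc.mpr ?_)
    rw [Fin.val_sub_sub_of_val_sub_le hxy, Fin.val_sub_sub_of_val_sub_le (hxy.trans hyz)]
    omega
  · rcases eq_or_ne x z with rfl | hxz
    · rwa [show y = x from sub_left_inj.mp (Fin.ext (show (y - c).val = (x - c).val by omega))]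
    refine absurd (h (mem_cyclicIcc.mpr ?_)) hc
    have := Fin.val_sub_add_val_sub fun h' : z = c => hc (h' ▸ hz)
    have := Fin.val_sub_add_val_sub hxz
    have := Fin.val_sub_sub_of_val_sub_le (hxy.trans hyz)
    omega

end CircBlock

theorem circBlock_setOf_fract_sub_mem {n : ℕ} {u : Fin n → ℝ} (hu : Monotone u)
    (hu0 : ∀ j, 0 ≤ u j) (hu1 : ∀ j, u j < 1) (c : ℝ) {J : Set ℝ} (hJ : J.OrdConnected) :
    CircBlock {j | Int.fract (u j - c) ∈ J} := by
  wlog hc : 0 ≤ c ∧ c < 1 generalizing c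
  · convert this (Int.fract c) ⟨Int.fract_nonneg c, Int.fract_lt_one c⟩ using 4 with j
    rw [show u j - c = u j - Int.fract c - ⌊c⌋ by rw [Int.fract]; ring, Int.fract_sub_intCast]
  have fract_eq (j) : Int.fract (u j - c) = if c ≤ u j then u j - c else u j - c + 1 := by
    rw [Int.fract_eq_iff]
    have := hu0 j; have := hu1 j
    split_ifs
    · exact ⟨by linarith, by linarith, 0, by simp⟩
    · exact ⟨by linarith, by linarith, -1, by simp⟩
  set S₁ := {j | c ≤ u j ∧ u j - c ∈ J}
  set S₂ := {j | u j < c ∧ u j - c + 1 ∈ J}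
  have hS : {j | Int.fract (u j - c) ∈ J} = S₁ ∪ S₂ := by
    ext j
    simp only [Set.mem_ofPred_eq, Set.mem_union, S₁, S₂, fract_eq]
    split_ifs with h <;> simp [h, not_lt.mpr, lt_of_not_ge]
  rcases S₂.eq_empty_or_nonempty with h₂ | ⟨j₂, hj₂⟩
  · rw [hS, h₂, Set.union_empty]
    exact CircBlock.of_ordConnected ((Set.ordConnected_Ici.preimage_mono hu).inter
      (hJ.preimage_mono (hu.add_const (-c))))
  rcases S₁.eq_empty_or_nonempty with h₁ | ⟨j₁, hj₁⟩
  · rw [hS, h₁, Set.empty_union]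
    exact CircBlock.of_ordConnected ((Set.ordConnected_Iio.preimage_mono hu).inter
      (hJ.preimage_mono ((hu.add_const (-c)).add_const 1)))
  -- Both pieces are nonempty: then the values in `J` fill the gap between them, so `S₂` is an
  -- initial and `S₁` a final segment.
  have := j₁.neZero
  rw [hS, Set.union_comm]
  refine CircBlock.union_of_isLowerSet_of_isUpperSet (fun j j' hj'j hj => ⟨?_, ?_⟩)
    (fun j j' hjj' hj => ⟨?_, ?_⟩)
  · exact (hu hj'j).trans_lt hj.1
  · exact hJ.out hj₁.2 hj.2 ⟨by linarith [hu1 j₁, hu0 j'], by linarith [hu hj'j]⟩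
  · exact hj.1.trans (hu hjj')
  · exact hJ.out hj.2 hj₂.2 ⟨by linarith [hu hjj'], by linarith [hu1 j', hu0 j₂]⟩

namespace Int

variable {R : Type*} [CommRing R] [LinearOrder R] [IsStrictOrderedRing R] [FloorRing R]

theorem fract_sub_fract_sub_fract (x y : R) :
    Int.fract (x - y) = Int.fract (Int.fract x - Int.fract y) :=
  Int.fract_eq_fract.mpr ⟨⌊x⌋ - ⌊y⌋, by rw [Int.fract, Int.fract]; push_cast; ring⟩

theorem fract_fract_sub (x y : R) : Int.fract (Int.fract x - y) = Int.fract (x - y) := by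
  rw [Int.fract_sub_fract_sub_fract, Int.fract_fract, ← Int.fract_sub_fract_sub_fract]

theorem fract_eq_add_one {x : R} (h0 : -1 ≤ x) (h1 : x < 0) : Int.fract x = x + 1 :=
  Int.fract_eq_iff.mpr ⟨by linarith, by linarith, -1, by push_cast; ring⟩

theorem fract_le_iff_fract_sub_le {t M : R} (h0 : 0 ≤ M) (h1 : M < 1) :
    Int.fract t ≤ M ↔ Int.fract (M - t) ≤ M := by
  rw [show M - t = M - Int.fract t - ⌊t⌋ by rw [Int.fract]; ring, Int.fract_sub_intCast]
  have := Int.fract_nonneg t; have := Int.fract_lt_one t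
  rcases le_or_gt (Int.fract t) M with h | h
  · rw [(Int.fract_eq_self (a := M - Int.fract t)).mpr ⟨by linarith, by linarith⟩]
    exact iff_of_true h (by linarith)
  · rw [Int.fract_eq_add_one (x := M - Int.fract t) (by linarith) (by linarith)]
    exact iff_of_false h.not_ge (by linarith)

end Int

section arc

variable {a ℓ a' ℓ' x : ℝ}

theorem arcMem_fract_iff : arcMem a ℓ (Int.fract x) ↔ arcMem a ℓ x := by
  rw [arcMem, arcMem, Int.fract_fract_sub]

theorem arcMem_self (h : 0 ≤ ℓ) : arcMem a ℓ a := by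
  rwa [arcMem, sub_self, Int.fract_zero]

theorem arcMem_add_self (h : 0 ≤ ℓ) : arcMem a ℓ (a + ℓ) := by
  rw [arcMem, add_sub_cancel_left, Int.fract]
  linarith [Int.cast_nonneg (R := ℝ) (Int.floor_nonneg.mpr h)]

theorem arcSet_subset_arcSet (h : Int.fract (a' - a) + ℓ' ≤ ℓ) :
    arcSet a' ℓ' ⊆ arcSet a ℓ :=
  fun x (hx : Int.fract (x - a') ≤ ℓ') =>
  calc Int.fract (x - a) = Int.fract ((x - a') + (a' - a)) := by ring_nf
    _ ≤ Int.fract (x - a') + Int.fract (a' - a) := Int.fract_add_le _ _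
    _ ≤ ℓ := by linarith

theorem arcSet_eq_of_fract_add_le (hproper : ¬ arcSet a' ℓ' ⊂ arcSet a ℓ)
    (h : Int.fract (a' - a) + ℓ' ≤ ℓ) : arcSet a' ℓ' = arcSet a ℓ :=
  (arcSet_subset_arcSet h).eq_of_not_ssubset hproper

theorem arcMem_of_fract_sub_le (hproper : ¬ arcSet a' ℓ' ⊂ arcSet a ℓ) (hx : arcMem a ℓ x)
    (hle : Int.fract (x - a') ≤ Int.fract (x - a)) : arcMem a' ℓ' x := by
  by_contra hx'
  replace hx' : ℓ' < Int.fract (x - a') := lt_of_not_ge hx'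
  have := Int.fract_lt_one (x - a)
  have := Int.fract_nonneg (x - a')
  have hd : Int.fract (a' - a) = Int.fract (x - a) - Int.fract (x - a') :=
    Int.fract_eq_iff.mpr ⟨by linarith, by linarith, ⌊x - a⌋ - ⌊x - a'⌋, by
      rw [Int.fract, Int.fract]; push_cast; ring⟩
  have hsame := arcSet_eq_of_fract_add_le hproper (by rw [arcMem] at hx; linarith)
  have hx : x ∈ arcSet a ℓ := hx
  rw [← hsame] at hx
  exact hx'.not_ge hx

/-- The offsets from `a` of the points of the arc `(a, ℓ)` outside the arc `(a', ℓ')`, when the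
latter does not end inside the former. -/
def arcWindow (a ℓ a' ℓ' : ℝ) : Set ℝ :=
  Set.Icc 0 ℓ ∩ Set.Ioo (Int.fract (a' - a) + ℓ' - 1) (Int.fract (a' - a))

theorem arcWindow_ordConnected : (arcWindow a ℓ a' ℓ').OrdConnected :=
  Set.ordConnected_Icc.inter Set.ordConnected_Ioo

theorem arcMem_and_not_arcMem_iff (h : ℓ < Int.fract (a' - a) + ℓ') :
    arcMem a ℓ x ∧ ¬ arcMem a' ℓ' x ↔ Int.fract (x - a) ∈ arcWindow a ℓ a' ℓ' := by
  set w := Int.fract (x - a)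
  set d := Int.fract (a' - a)
  have hw0 : 0 ≤ w := Int.fract_nonneg _
  have hw1 : w < 1 := Int.fract_lt_one _
  have hd0 : 0 ≤ d := Int.fract_nonneg _
  have hd1 : d < 1 := Int.fract_lt_one _
  have hx : Int.fract (x - a') = Int.fract (w - d) := by
    rw [← Int.fract_sub_fract_sub_fract]; ring_nf
  unfold arcMem arcWindow
  rw [hx]
  rcases le_or_gt d w with hdw | hdw
  · rw [(Int.fract_eq_self (a := w - d)).mpr ⟨by linarith, by linarith⟩]
    constructor
    · rintro ⟨h1, h2⟩; linarith
    · rintro ⟨-, -, h3⟩; linarith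
  · rw [Int.fract_eq_add_one (x := w - d) (by linarith) (by linarith)]
    constructor
    · rintro ⟨h1, h2⟩; exact ⟨⟨hw0, h1⟩, by linarith, hdw⟩
    · rintro ⟨⟨-, h1⟩, h2, -⟩; exact ⟨h1, by linarith⟩

end arc

section SortedArcs

variable {n : ℕ} {A L Q : Fin n → ℝ}

theorem circBlock_setOf_arcMem_points (hQ : Monotone Q) (hQ0 : ∀ j, 0 ≤ Q j)
    (hQ1 : ∀ j, Q j < 1) (i : Fin n) : CircBlock {j | arcMem (A i) (L i) (Q j)} :=
  circBlock_setOf_fract_sub_mem hQ hQ0 hQ1 (A i) Set.ordConnected_Iic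

theorem circBlock_setOf_arcMem_arcs (hA : Monotone fun i => Int.fract (A i))
    (hproper : ∀ i k, ¬ arcSet (A i) (L i) ⊂ arcSet (A k) (L k)) (x : ℝ) :
    CircBlock {i | arcMem (A i) (L i) x} := by
  set C := {i | arcMem (A i) (L i) x}
  rcases C.eq_empty_or_nonempty with hC | hC
  · exact Or.inl hC
  obtain ⟨i₀, hi₀, hmax⟩ :=
    Set.exists_max_image C (fun i => Int.fract (x - A i)) C.toFinite hC
  set M := Int.fract (x - A i₀)
  have hC : C = {i | Int.fract (Int.fract (A i) - (x - M)) ∈ Set.Iic M} := by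
    ext i
    change i ∈ C ↔ Int.fract (Int.fract (A i) - (x - M)) ≤ M
    rw [Int.fract_fract_sub, show A i - (x - M) = M - (x - A i) by ring,
      ← Int.fract_le_iff_fract_sub_le (Int.fract_nonneg _) (Int.fract_lt_one _)]
    exact ⟨hmax i, arcMem_of_fract_sub_le (hproper i i₀) hi₀⟩
  rw [hC]
  exact circBlock_setOf_fract_sub_mem hA (fun _ => Int.fract_nonneg _)
    (fun _ => Int.fract_lt_one _) _ Set.ordConnected_Iic

theorem circBlock_setOf_arcMem_sdiff (hQ : Monotone Q) (hQ0 : ∀ j, 0 ≤ Q j)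
    (hQ1 : ∀ j, Q j < 1) (hproper : ∀ i k, ¬ arcSet (A i) (L i) ⊂ arcSet (A k) (L k))
    (r s : Fin n) : CircBlock {j | arcMem (A r) (L r) (Q j) ∧ ¬ arcMem (A s) (L s) (Q j)} := by
  by_cases hrs : Int.fract (A s - A r) + L s ≤ L r
  · have hsame := arcSet_eq_of_fract_add_le (hproper s r) hrs
    refine Or.inl (Set.eq_empty_of_forall_notMem fun j ⟨hr, hs⟩ => hs ?_)
    change Q j ∈ arcSet (A s) (L s)
    exact hsame ▸ hr
  · rw [Set.ext fun j => arcMem_and_not_arcMem_iff (x := Q j) (lt_of_not_ge hrs)]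
    exact circBlock_setOf_fract_sub_mem hQ hQ0 hQ1 _ arcWindow_ordConnected

theorem circBlock_setOf_arcMem_sdiff_sdiff (hQ : Monotone Q) (hQ0 : ∀ j, 0 ≤ Q j)
    (hQ1 : ∀ j, Q j < 1) (hproper : ∀ i k, ¬ arcSet (A i) (L i) ⊂ arcSet (A k) (L k))
    {r s t : Fin n} (hr : ∀ j, arcMem (A r) (L r) (Q j)) (hs : ∃ j, ¬ arcMem (A s) (L s) (Q j))
    (ht : ∃ j, ¬ arcMem (A t) (L t) (Q j)) :
    CircBlock {j | arcMem (A r) (L r) (Q j) ∧ ¬ arcMem (A s) (L s) (Q j) ∧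
      ¬ arcMem (A t) (L t) (Q j)} := by
  have not_nested : ∀ s, (∃ j, ¬ arcMem (A s) (L s) (Q j)) →
      L r < Int.fract (A s - A r) + L s := by
    rintro s ⟨j, hj⟩
    by_contra hrs
    have hsame := arcSet_eq_of_fract_add_le (hproper s r) (le_of_not_gt hrs)
    exact hj (show Q j ∈ arcSet (A s) (L s) from hsame ▸ hr j)
  have hW : {j | arcMem (A r) (L r) (Q j) ∧ ¬ arcMem (A s) (L s) (Q j) ∧
      ¬ arcMem (A t) (L t) (Q j)} = {j | Int.fract (Q j - A r) ∈
        arcWindow (A r) (L r) (A s) (L s) ∩ arcWindow (A r) (L r) (A t) (L t)} := by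
    ext j
    have hs' := arcMem_and_not_arcMem_iff (x := Q j) (not_nested s hs)
    have ht' := arcMem_and_not_arcMem_iff (x := Q j) (not_nested t ht)
    rw [Set.mem_ofPred_eq, Set.mem_ofPred_eq, Set.mem_inter_iff, ← hs', ← ht']
    tauto
  rw [hW]
  exact circBlock_setOf_fract_sub_mem hQ hQ0 hQ1 _
    (arcWindow_ordConnected.inter arcWindow_ordConnected)

theorem matCond_arcMem (hA : Monotone fun i => Int.fract (A i)) (hQ : Monotone Q)
    (hQ0 : ∀ j, 0 ≤ Q j) (hQ1 : ∀ j, Q j < 1)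
    (hproper : ∀ i k, ¬ arcSet (A i) (L i) ⊂ arcSet (A k) (L k)) :
    MatCond fun i j => arcMem (A i) (L i) (Q j) :=
  ⟨circBlock_setOf_arcMem_points hQ hQ0 hQ1,
    fun j => circBlock_setOf_arcMem_arcs hA hproper (Q j),
    circBlock_setOf_arcMem_sdiff hQ hQ0 hQ1 hproper,
    fun _ _ _ hr _ hs _ ht => circBlock_setOf_arcMem_sdiff_sdiff hQ hQ0 hQ1 hproper hr hs ht⟩

end SortedArcs

theorem augM_iff_arcMem {V : Type*} {n : ℕ} {E : V → V → Prop} {a ℓ p : V → ℝ}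
    (hp : ∀ v, arcMem (a v) (ℓ v) (p v))
    (hE : ∀ u v, E u v ↔ u ≠ v ∧ arcMem (a u) (ℓ u) (p v))
    (ρ γ : Fin n ≃ V) (i j : Fin n) :
    AugM E ρ γ i j ↔ arcMem (a (ρ i)) (ℓ (ρ i)) (p (γ j)) := by
  rw [AugM, hE]
  by_cases h : ρ i = γ j
  · simp only [h, ne_eq, not_true_eq_false, false_and, false_or, true_iff]
    exact hp _
  · simp [h]

theorem exists_matCond_of_isProperCACatchDigraph {V : Type*} [Fintype V] {E : V → V → Prop}
    (h : IsProperCACatchDigraph E) :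
    ∃ ρ γ : Fin (Fintype.card V) ≃ V, MatCond (AugM E ρ γ) := by
  obtain ⟨a, ℓ, p, hp, hproper, hE⟩ := h
  set e := (Fintype.equivFin V).symm
  set fa := fun i => Int.fract (a (e i))
  set fp := fun j => Int.fract (p (e j))
  refine ⟨(Tuple.sort fa).trans e, (Tuple.sort fp).trans e, ?_⟩
  have hM : AugM E ((Tuple.sort fa).trans e) ((Tuple.sort fp).trans e) = fun i j =>
      arcMem (a (e (Tuple.sort fa i))) (ℓ (e (Tuple.sort fa i))) (fp (Tuple.sort fp j)) := by
    ext i j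
    rw [augM_iff_arcMem hp hE]
    exact arcMem_fract_iff.symm
  rw [hM]
  exact matCond_arcMem (Tuple.monotone_sort fa) (Tuple.monotone_sort fp)
    (fun _ => Int.fract_nonneg _) (fun _ => Int.fract_lt_one _) (fun _ _ => hproper _ _)

theorem exists_forall_notMem_or_add_one_notMem {ι : Type*} [DecidableEq ι] {n : ℕ} [NeZero n]
    (C : ι → Set (Fin n)) (κ : ι → ℕ) (hCu : ∀ i, C i ≠ Set.univ)
    (hinter : ∀ i k, CircBlock (C i ∩ C k))
    (hcol : ∀ j x y z, j ∈ C x → j ∈ C z → κ x ≤ κ y → κ y ≤ κ z → j ∈ C y)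
    (N : Finset ι) :
    ∃ g, ∀ i ∈ N, g ∉ C i ∨ g + 1 ∉ C i := by
  refine Finset.induction_on_min_value κ N ⟨0, by simp⟩ fun bot N _ hbot ih => ?_
  obtain ⟨g, hg⟩ := ih
  simp only [Finset.forall_mem_insert]
  by_cases hbg : g ∉ C bot ∨ g + 1 ∉ C bot
  · exact ⟨g, hbg, hg⟩
  push Not at hbg
  obtain ⟨u, w, hbot_eq⟩ := (circBlock_iff.mp (Set.inter_self (C bot) ▸ hinter bot bot))
    |>.resolve_left (Set.nonempty_of_mem hbg.1).ne_empty
  have hu : u ∈ C bot := hbot_eq ▸ left_mem_cyclicIcc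
  have hw : w ∈ C bot := hbot_eq ▸ right_mem_cyclicIcc
  have hu1 : u - 1 ∉ C bot := hbot_eq ▸ sub_one_notMem_cyclicIcc (hbot_eq ▸ hCu bot)
  have hw1 : w + 1 ∉ C bot := hbot_eq ▸ add_one_notMem_cyclicIcc (hbot_eq ▸ hCu bot)
  have not_both : ∀ k ∈ N, u ∈ C k → w ∈ C k → False := by
    intro k hk huk hwk
    have hsub : C bot ⊆ C k := by
      have := hinter bot k
      rw [hbot_eq] at this ⊢
      exact this.cyclicIcc_subset_of_inter (hbot_eq ▸ hCu bot) huk hwk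
    rcases hg k hk with h | h
    exacts [h (hsub hbg.1), h (hsub hbg.2)]
  by_cases hw_gap : ∀ k ∈ N, w ∉ C k ∨ w + 1 ∉ C k
  · exact ⟨w, Or.inr hw1, hw_gap⟩
  by_cases hu_gap : ∀ k ∈ N, u - 1 ∉ C k ∨ u - 1 + 1 ∉ C k
  · exact ⟨u - 1, Or.inl hu1, hu_gap⟩
  push Not at hw_gap hu_gap
  obtain ⟨k, hk, hwk, -⟩ := hw_gap
  obtain ⟨k', hk', -, huk'⟩ := hu_gap
  rw [sub_add_cancel] at huk'
  -- `bot` is `κ`-minimal and the columns are `κ`-intervals, so the `κ`-earlier of `k`, `k'`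
  -- contains both `u` and `w`.
  exfalso
  rcases le_total (κ k) (κ k') with hkk' | hk'k
  · exact not_both k hk (hcol u bot k k' hu huk' (hbot k hk) hkk') hwk
  · exact not_both k' hk' huk' (hcol w bot k' k hw hwk (hbot k' hk') hk'k)

theorem exists_forall_mem_or_add_one_mem {n : ℕ} [NeZero n] {B : Fin n → Fin n → Prop}
    (hB : MatCond B) (hrow : ∀ i, ∃ j, B i j) {f : Fin n} (hf : ∀ j, B f j) :
    ∃ g, ∀ i, B i g ∨ B i (g + 1) := by
  classical
  have hinter : ∀ i k, CircBlock ({j | ¬ B i j} ∩ {j | ¬ B k j}) := by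
    intro i k
    by_cases hik : (∃ j, ¬ B i j) ∧ ∃ j, ¬ B k j
    · convert hB.2.2.2 f i k hf (hrow i) hik.1 (hrow k) hik.2 using 1
      ext j
      simp [hf j]
    · refine Or.inl (Set.eq_empty_of_forall_notMem ?_)
      exact fun j ⟨hi, hk⟩ => hik ⟨⟨j, hi⟩, j, hk⟩
  obtain ⟨g, hg⟩ := exists_forall_notMem_or_add_one_notMem (fun i => {j | ¬ B i j})
    (fun i => (i - f).val)
    (fun i => (Set.ne_univ_iff_exists_notMem _).mpr ((hrow i).imp fun _ hj h => h hj))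
    hinter (fun j x y z hx hz hxy hyz => (hB.2.1 j).compl.mem_of_val_sub_le
      (not_not.mpr (hf j)) hx hz hxy hyz) Finset.univ
  exact ⟨g, fun i => (hg i (Finset.mem_univ i)).imp not_not.mp not_not.mp⟩

theorem arcMem_div_iff {n : ℕ} (hn : 0 < n) {s ℓ t o : ℝ} (k : ℤ) (h : t - s = o + k * n)
    (h0 : 0 ≤ o) (h1 : o < n) : arcMem (s / n) (ℓ / n) (t / n) ↔ o ≤ ℓ := by
  have hn' : (0 : ℝ) < n := Nat.cast_pos.mpr hn
  have hfract : Int.fract (t / n - s / n) = o / n := Int.fract_eq_iff.mpr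
    ⟨div_nonneg h0 hn'.le, (div_lt_one hn').mpr h1, k, by field_simp; linarith⟩
  rw [arcMem, hfract, div_le_div_iff_of_pos_right hn']

noncomputable def arcMargin (n m : ℕ) : ℝ := ((n : ℝ) - m) / (n + 2)

section arcMargin

variable {n m m' : ℕ}

theorem arcMargin_pos (h : m < n) : 0 < arcMargin n m :=
  div_pos (by rw [sub_pos]; exact_mod_cast h) (by positivity)

theorem arcMargin_lt_one : arcMargin n m < 1 := by
  rw [arcMargin, div_lt_one (by positivity)]
  linarith [m.cast_nonneg (α := ℝ)]

theorem arcMargin_lt_arcMargin (h : m < m') : arcMargin n m' < arcMargin n m :=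
  div_lt_div_of_pos_right (by linarith [show (m : ℝ) < m' by exact_mod_cast h]) (by positivity)

theorem arcMargin_add_arcMargin_lt (h' : m' < n) : arcMargin n m + arcMargin n m' < n - m' := by
  have h'' : (m' : ℝ) + 1 ≤ n := by exact_mod_cast h'
  have : (0 : ℝ) ≤ m := m.cast_nonneg
  rw [arcMargin, arcMargin, ← add_div, div_lt_iff₀ (by positivity)]
  nlinarith

theorem arcMargin_lt_half (h : m + 1 = n) : arcMargin n m < 1 / 2 := by
  rw [arcMargin, ← h]
  push_cast
  rw [div_lt_div_iff₀ (by positivity) (by norm_num)]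
  linarith [m.cast_nonneg (α := ℝ)]

end arcMargin

/-- With `j : Fin n` placed at `j / n` on the circle `ℝ / ℤ`, the arc of the cyclic interval
`[a, b]` is `[a - x, b + x] / n` with margin `x = arcMargin n (b - a)`. -/
noncomputable def intervalArcStart {n : ℕ} (a b : Fin n) : ℝ :=
  ((a : ℕ) - arcMargin n (b - a).val) / n

noncomputable def intervalArcLength {n : ℕ} (a b : Fin n) : ℝ :=
  ((b - a).val + 2 * arcMargin n (b - a).val) / n

theorem intervalArcLength_nonneg {n : ℕ} {a b : Fin n} : 0 ≤ intervalArcLength a b :=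
  div_nonneg (by linarith [arcMargin_pos (b - a).isLt]) (Nat.cast_nonneg n)

section intervalArc

variable {n : ℕ} [NeZero n] {a b a' b' g : Fin n}

theorem arcMem_intervalArc_iff (a b j : Fin n) :
    arcMem (intervalArcStart a b) (intervalArcLength a b) ((j : ℕ) / n) ↔
      j ∈ cyclicIcc a b := by
  obtain ⟨k, hk⟩ := Fin.exists_val_sub_eq j a
  have hx0 := arcMargin_pos (b - a).isLt
  have hx1 := arcMargin_lt_one (n := n) (m := (b - a).val)
  have hj : ((j - a).val : ℝ) + 1 ≤ n := by exact_mod_cast (j - a).isLt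
  rw [intervalArcStart, intervalArcLength, arcMem_div_iff (NeZero.pos n) k
    (o := (j - a).val + arcMargin n (b - a).val) (by linarith) (by positivity) (by linarith),
    mem_cyclicIcc]
  constructor
  · intro h
    have : ((j - a).val : ℝ) < (b - a).val + 1 := by linarith
    exact Nat.lt_succ_iff.mp (by exact_mod_cast this)
  · intro h
    have : ((j - a).val : ℝ) ≤ (b - a).val := by exact_mod_cast h
    linarith

theorem not_arcMem_intervalArc_start (h : (b - a).val < (b' - a).val) :
    ¬ arcMem (intervalArcStart a b') (intervalArcLength a b') (intervalArcStart a b) := by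
  have hx := arcMargin_lt_arcMargin (n := n) h
  have hxx := arcMargin_add_arcMargin_lt (m := (b - a).val) (b' - a).isLt
  have hn : (1 : ℝ) ≤ n := by exact_mod_cast NeZero.one_le
  rw [intervalArcStart, intervalArcStart, intervalArcLength, arcMem_div_iff (NeZero.pos n) (-1)
    (o := n + arcMargin n (b' - a).val - arcMargin n (b - a).val) (by push_cast; ring)
    (by linarith [arcMargin_lt_one (n := n) (m := (b - a).val), arcMargin_pos (b' - a).isLt])
    (by linarith)]
  linarith

theorem not_arcMem_intervalArc_end (h : (b - a).val < (b - a').val) :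
    ¬ arcMem (intervalArcStart a' b) (intervalArcLength a' b)
      (intervalArcStart a b + intervalArcLength a b) := by
  have hx := arcMargin_lt_arcMargin (n := n) h
  have hxx := arcMargin_add_arcMargin_lt (m := (b - a).val) (b - a').isLt
  obtain ⟨k, hk⟩ := Fin.exists_val_sub_eq b a
  obtain ⟨k', hk'⟩ := Fin.exists_val_sub_eq b a'
  rw [intervalArcStart, intervalArcStart, intervalArcLength, intervalArcLength, ← add_div,
    arcMem_div_iff (NeZero.pos n) (k' - k)
    (o := (b - a').val + arcMargin n (b - a).val + arcMargin n (b - a').val)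
    (by push_cast; linarith)
    (by linarith [arcMargin_pos (b - a).isLt, arcMargin_pos (b - a').isLt]) (by linarith)]
  linarith

theorem not_arcMem_intervalArc_add_one_self :
    ¬ arcMem (intervalArcStart (g + 1) g) (intervalArcLength (g + 1) g)
      ((g + 1 / 2 : ℝ) / n) := by
  obtain ⟨k, hk⟩ := Fin.exists_val_sub_eq g (g + 1)
  have hm : (g - (g + 1)).val + 1 = n := by
    rw [show g - (g + 1) = -1 by abel, Fin.val_neg_one_of_neZero]
    exact Nat.sub_add_cancel NeZero.one_le
  have hm' : ((g - (g + 1)).val : ℝ) + 1 = n := by exact_mod_cast hm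
  have hx := arcMargin_lt_half hm
  rw [intervalArcStart, intervalArcLength, arcMem_div_iff (NeZero.pos n) k
    (o := (g - (g + 1)).val + 1 / 2 + arcMargin n (g - (g + 1)).val) (by linarith)
    (by linarith [arcMargin_pos (g - (g + 1)).isLt]) (by linarith)]
  linarith

theorem arcMem_intervalArc_of_mem_of_ne (hg : g ∈ cyclicIcc a b) (hgb : g ≠ b) :
    arcMem (intervalArcStart a b) (intervalArcLength a b) ((g + 1 / 2 : ℝ) / n) := by
  obtain ⟨k, hk⟩ := Fin.exists_val_sub_eq g a
  have hlt : ((g - a).val : ℝ) + 1 ≤ (b - a).val := by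
    exact_mod_cast val_sub_lt_of_mem_cyclicIcc hg hgb
  have hb : ((b - a).val : ℝ) + 1 ≤ n := by exact_mod_cast (b - a).isLt
  have hx0 := arcMargin_pos (b - a).isLt
  rw [intervalArcStart, intervalArcLength, arcMem_div_iff (NeZero.pos n) k
    (o := (g - a).val + 1 / 2 + arcMargin n (b - a).val) (by linarith) (by linarith)
    (by linarith [arcMargin_lt_one (n := n) (m := (b - a).val)])]
  linarith

theorem left_eq_or_right_eq_of_ssubset (hS : cyclicIcc a b ⊂ cyclicIcc a' b')
    (hT : cyclicIcc a' b' ≠ Set.univ) (hD : CircBlock (cyclicIcc a' b' \ cyclicIcc a b)) :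
    a = a' ∨ b = b' := by
  by_contra! h
  have ha' : a' ∉ cyclicIcc a b := fun ha' => h.1 (eq_left_of_mem_of_sub_one_notMem ha'
    fun h' => sub_one_notMem_cyclicIcc hT (hS.subset h')).symm
  have hb' : b' ∉ cyclicIcc a b := fun hb' => h.2 (eq_right_of_mem_of_add_one_notMem hb'
    fun h' => add_one_notMem_cyclicIcc hT (hS.subset h')).symm
  have ha : a ∉ cyclicIcc a' b' \ cyclicIcc a b := fun h' => h'.2 left_mem_cyclicIcc
  rcases hD.cyclicIcc_subset_or_cyclicIcc_subset ⟨left_mem_cyclicIcc, ha'⟩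
    ⟨right_mem_cyclicIcc, hb'⟩ with hsub | hsub
  · exact ha (hsub (hS.subset left_mem_cyclicIcc))
  · rcases eq_or_ne a' b' with rfl | hab'
    · exact ha (hsub (hS.subset left_mem_cyclicIcc))
    · exact add_one_notMem_cyclicIcc hT (hsub (add_one_mem_cyclicIcc hab')).1

theorem left_eq_or_right_eq_or_mem_and_mem (hg : g ∈ cyclicIcc a b ∨ g + 1 ∈ cyclicIcc a b) :
    a = g + 1 ∨ b = g ∨ (g ∈ cyclicIcc a b ∧ g + 1 ∈ cyclicIcc a b) := by
  by_cases hg0 : g ∈ cyclicIcc a b <;> by_cases hg1 : g + 1 ∈ cyclicIcc a b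
  · exact Or.inr (Or.inr ⟨hg0, hg1⟩)
  · exact Or.inr (Or.inl (eq_right_of_mem_of_add_one_notMem hg0 hg1).symm)
  · exact Or.inl (eq_left_of_mem_of_sub_one_notMem hg1 (by rwa [add_sub_cancel_right])).symm
  · exact absurd hg (by tauto)

theorem not_intervalArc_subset_of_ssubset (hS : cyclicIcc a b ⊂ cyclicIcc a' b')
    (h : a = a' ∨ b = b' ∨
      (a' = g + 1 ∧ b' = g ∧ g ∈ cyclicIcc a b ∧ g + 1 ∈ cyclicIcc a b)) :
    ¬ arcSet (intervalArcStart a b) (intervalArcLength a b) ⊆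
      arcSet (intervalArcStart a' b') (intervalArcLength a' b') := by
  intro hsub
  have hm : (b - a).val < (b' - a').val := by
    have := Set.ncard_lt_ncard hS (Set.toFinite _)
    rw [ncard_cyclicIcc, ncard_cyclicIcc] at this
    omega
  rcases h with rfl | rfl | ⟨ha', hb', hg, hg1⟩
  · exact not_arcMem_intervalArc_start hm (hsub (arcMem_self intervalArcLength_nonneg))
  · exact not_arcMem_intervalArc_end hm (hsub (arcMem_add_self intervalArcLength_nonneg))
  · have hne : cyclicIcc a b ≠ Set.univ := fun h => hS.2 (h ▸ Set.subset_univ _)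
    have hgb : g ≠ b := fun hgb => add_one_notMem_cyclicIcc hne (hgb ▸ hg1)
    rw [ha', hb'] at hsub
    exact not_arcMem_intervalArc_add_one_self (hsub (arcMem_intervalArc_of_mem_of_ne hg hgb))

theorem not_intervalArc_ssubset (heq : cyclicIcc a b = cyclicIcc a' b' → a = a' ∧ b = b')
    (hD : CircBlock (cyclicIcc a' b' \ cyclicIcc a b))
    (huniv : cyclicIcc a' b' = Set.univ →
      a' = g + 1 ∧ b' = g ∧ (g ∈ cyclicIcc a b ∨ g + 1 ∈ cyclicIcc a b)) :
    ¬ arcSet (intervalArcStart a b) (intervalArcLength a b) ⊂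
      arcSet (intervalArcStart a' b') (intervalArcLength a' b') := by
  intro h
  by_cases hsub : cyclicIcc a b ⊆ cyclicIcc a' b'
  · rcases hsub.eq_or_ssubset with hS | hS
    · obtain ⟨rfl, rfl⟩ := heq hS
      exact h.ne rfl
    refine not_intervalArc_subset_of_ssubset (g := g) hS ?_ h.subset
    by_cases hT : cyclicIcc a' b' = Set.univ
    · obtain ⟨rfl, rfl, hg⟩ := huniv hT
      rcases left_eq_or_right_eq_or_mem_and_mem hg with h | h | h
      exacts [Or.inl h, Or.inr (Or.inl h), Or.inr (Or.inr ⟨rfl, rfl, h⟩)]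
    · exact Or.imp_right Or.inl (left_eq_or_right_eq_of_ssubset hS hT hD)
  · obtain ⟨j, hja, hjb⟩ := Set.not_subset.mp hsub
    exact hjb ((arcMem_intervalArc_iff _ _ j).mp
      (h.subset ((arcMem_intervalArc_iff _ _ j).mpr hja)))

end intervalArc

theorem exists_cyclicIcc_endpoints {n : ℕ} [NeZero n] (g : Fin n) :
    ∃ a b : Set (Fin n) → Fin n,
      (∀ S, CircBlock S → S.Nonempty → S = cyclicIcc (a S) (b S)) ∧
      ∀ S, S = Set.univ → a S = g + 1 ∧ b S = g := by
  have (S : Set (Fin n)) : ∃ e : Fin n × Fin n, (CircBlock S → S.Nonempty →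
      S = cyclicIcc e.1 e.2) ∧ (S = Set.univ → e.1 = g + 1 ∧ e.2 = g) := by
    by_cases hS : S = Set.univ
    · exact ⟨(g + 1, g), fun _ _ => hS.trans (cyclicIcc_add_one_self g).symm,
        fun _ => ⟨rfl, rfl⟩⟩
    by_cases hblock : CircBlock S ∧ S.Nonempty
    · obtain ⟨a, b, hab⟩ := (circBlock_iff.mp hblock.1).resolve_left hblock.2.ne_empty
      exact ⟨(a, b), fun _ _ => hab, fun h => absurd h hS⟩
    · exact ⟨(0, 0), fun h h' => absurd ⟨h, h'⟩ hblock, fun h => absurd h hS⟩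
  choose e he using this
  exact ⟨fun S => (e S).1, fun S => (e S).2, fun S => (he S).1, fun S => (he S).2⟩

theorem exists_arcs_of_matCond {n : ℕ} [NeZero n] {B : Fin n → Fin n → Prop} (hB : MatCond B)
    (hrow : ∀ i, ∃ j, B i j) :
    ∃ s ℓ : Fin n → ℝ, (∀ i j : Fin n, arcMem (s i) (ℓ i) ((j : ℕ) / n) ↔ B i j) ∧
      ∀ i k, ¬ arcSet (s i) (ℓ i) ⊂ arcSet (s k) (ℓ k) := by
  obtain ⟨g, hg⟩ : ∃ g : Fin n, (∃ f, ∀ j, B f j) → ∀ i, B i g ∨ B i (g + 1) := by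
    by_cases hf : ∃ f, ∀ j, B f j
    · obtain ⟨f, hf⟩ := hf
      obtain ⟨g, hg⟩ := exists_forall_mem_or_add_one_mem hB hrow hf
      exact ⟨g, fun _ => hg⟩
    · exact ⟨0, fun h => absurd h hf⟩
  -- The endpoints are functions of the set of ones of a row, so that equal rows get equal arcs.
  obtain ⟨a, b, hab, huniv⟩ := exists_cyclicIcc_endpoints g
  set R : Fin n → Set (Fin n) := fun i => {j | B i j}
  have hR (i) : R i = cyclicIcc (a (R i)) (b (R i)) := hab (R i) (hB.1 i) (hrow i)
  refine ⟨fun i => intervalArcStart (a (R i)) (b (R i)),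
    fun i => intervalArcLength (a (R i)) (b (R i)), fun i j => ?_, fun i k => ?_⟩
  · rw [arcMem_intervalArc_iff, ← hR i]
    rfl
  refine not_intervalArc_ssubset (g := g) (fun h => ?_) ?_ fun hk => ?_
  · have : R i = R k := (hR i).trans (h.trans (hR k).symm)
    exact ⟨congrArg a this, congrArg b this⟩
  · rw [← hR i, ← hR k]
    exact hB.2.2.1 k i
  · rw [← hR k] at hk
    refine ⟨(huniv _ hk).1, (huniv _ hk).2, ?_⟩
    rw [← hR i]
    exact hg ⟨k, fun j => (hk ▸ Set.mem_univ j : j ∈ R k)⟩ i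

theorem isProperCACatchDigraph_of_matCond {V : Type*} [Fintype V] {E : V → V → Prop}
    (hirr : ∀ v, ¬ E v v) {ρ γ : Fin (Fintype.card V) ≃ V} (hM : MatCond (AugM E ρ γ)) :
    IsProperCACatchDigraph E := by
  rcases isEmpty_or_nonempty V with hV | hV
  · exact ⟨0, 0, 0, isEmptyElim, isEmptyElim, isEmptyElim⟩
  have : NeZero (Fintype.card V) := ⟨Fintype.card_ne_zero⟩
  obtain ⟨s, ℓ, hsℓ, hproper⟩ :=
    exists_arcs_of_matCond hM fun i => ⟨γ.symm (ρ i), Or.inr (by simp)⟩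
  refine ⟨fun v => s (ρ.symm v), fun v => ℓ (ρ.symm v),
    fun v => ((γ.symm v : ℕ) : ℝ) / Fintype.card V,
    fun v => (hsℓ _ _).mpr (Or.inr (by simp)),
    fun u v => hproper _ _, fun u v => ?_⟩
  rw [hsℓ, AugM, Equiv.apply_symm_apply, Equiv.apply_symm_apply]
  constructor
  · exact fun h => ⟨fun huv => hirr v (huv ▸ h), Or.inl h⟩
  · rintro ⟨huv, h | h⟩
    exacts [h, absurd h huv]

/-- a simple digraph is a proper circular-arc catch digraph iff
its augmented adjacency matrix can be brought, by independent row and column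
permutations, to a matrix satisfying the three conditions. -/
theorem stmt_15 {V : Type*} [Fintype V] (E : V → V → Prop)
    (hirr : ∀ v, ¬ E v v) :
    IsProperCACatchDigraph E ↔
      ∃ ρ γ : Fin (Fintype.card V) ≃ V, MatCond (AugM E ρ γ) :=
  ⟨exists_matCond_of_isProperCACatchDigraph, fun ⟨_, _, hM⟩ =>
    isProperCACatchDigraph_of_matCond hirr hM⟩
end
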